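/- arXiv:1504.03661 — 7 statements merged into one kernel-verified Lean document; each statement's English description precedes it below -/
import Mathlib

section
/- Let A be an ordered commutative monoid equipped with a second commutative monoid operation ∨ compatible with the order such that + distributes over ∨, i.e., x + (y ∨ z) = (x + y) ∨ (x + z). If nx ≥ ny for some positive integer n (where nx is the n-fold sum x + ... + x), then there exists z ∈ A with x + z ≥ y + z. -/
/-!
Write `n = m + 1`, `b k = k • x + (n - k) • y` and let `z` be the join of `k • x + (m - k) • y`
over `k ≤ m`. Since `+` distributes over the join, `y + z` is the join of `b 0, …, b m` and
`x + z` the join of `b 1, …, b n`. The two joins share `b 1, …, b m`, and the remaining terms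
compare as `b 0 = n • y ≤ n • x = b n`.
-/

namespace Multiset

variable {α : Type*} (op : α → α → α) [Std.Commutative op] [Std.Associative op]

theorem fold_cons_swap (a c : α) (s : Multiset α) :
    (a ::ₘ s).fold op c = (c ::ₘ s).fold op a := by
  rw [fold_cons'_left, fold_cons'_left, Std.Commutative.comm (op := op) a c]

theorem range_succ_eq_zero_cons (m : ℕ) : range (m + 1) = 0 ::ₘ (range m).map Nat.succ := by
  rw [← coe_range, List.range_succ_eq_map, ← cons_coe, ← map_coe, coe_range]

theorem fold_map_range_eq_fold_map_succ_range (f : ℕ → α) (m : ℕ) :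
    ((range m).map f).fold op (f m) = ((range m).map (f ∘ Nat.succ)).fold op (f 0) := by
  cases m with
  | zero => rfl
  | succ k =>
    calc ((range (k + 1)).map f).fold op (f (k + 1))
        = (f (k + 1) ::ₘ (range k).map (f ∘ Nat.succ)).fold op (f 0) := by
          rw [range_succ_eq_zero_cons, map_cons, map_map, fold_cons_swap]
      _ = _ := by rw [range_succ, map_cons]; rfl

theorem fold_le_fold_of_le [Preorder α] (hmono : ∀ a b c, a ≤ b → op a c ≤ op b c)
    {b c : α} (hbc : b ≤ c) (s : Multiset α) : s.fold op b ≤ s.fold op c := by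
  induction s using Multiset.induction_on with
  | empty => exact hbc
  | cons a s ih => simpa only [fold_cons_left, Std.Commutative.comm a] using hmono _ _ a ih

theorem add_fold [Add α] (hdist : ∀ a b c, a + op b c = op (a + b) (a + c))
    (a c : α) (s : Multiset α) : a + s.fold op c = (s.map (a + ·)).fold op (a + c) :=
  (fold_hom op (hdist a) c s).symm

end Multiset

open Multiset in
theorem stmt4_general {A : Type*} [AddCommMonoid A] [PartialOrder A] [IsOrderedAddMonoid A]
    (j : A → A → A)
    (hcomm : ∀ a b, j a b = j b a)
    (hassoc : ∀ a b c, j (j a b) c = j a (j b c))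
    (hmono : ∀ a b c, a ≤ b → j a c ≤ j b c)
    (hdist : ∀ a b c, a + j b c = j (a + b) (a + c))
    {x y : A} {n : ℕ} (hn : 0 < n) (h : n • y ≤ n • x) :
    ∃ z : A, y + z ≤ x + z := by
  have : Std.Commutative j := ⟨hcomm⟩
  have : Std.Associative j := ⟨hassoc⟩
  obtain ⟨m, rfl⟩ := Nat.exists_eq_add_one_of_ne_zero hn.ne'
  set b : ℕ → A := fun k => k • x + (m + 1 - k) • y
  set g : ℕ → A := fun k => k • x + (m - k) • y
  have hy : ∀ k ≤ m, y + g k = b k := fun k hk => by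
    simp only [g, b, Nat.sub_add_comm hk, succ_nsmul]
    abel
  have hx : ∀ k, x + g k = b (k + 1) := fun k => by
    simp only [g, b, Nat.add_sub_add_right, succ_nsmul]
    abel
  refine ⟨((range m).map g).fold j (g m), ?_⟩
  calc y + _ = ((range m).map b).fold j (b m) := by
        rw [add_fold j hdist, map_map, hy m le_rfl]
        congr 1
        exact map_congr rfl fun k hk => hy k (mem_range.1 hk).le
    _ = ((range m).map (b ∘ Nat.succ)).fold j (b 0) :=
        fold_map_range_eq_fold_map_succ_range j b m
    _ ≤ ((range m).map (b ∘ Nat.succ)).fold j (b (m + 1)) :=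
        fold_le_fold_of_le j hmono (by simpa [b] using h) _
    _ = x + _ := by
        rw [add_fold j hdist, map_map, hx]
        congr 1
        exact map_congr rfl fun k _ => (hx k).symm

/-- If an ordered commutative monoid `A` carries a second commutative monoid operation `∨`
(compatible with the order) over which `+` distributes, then `n • x ≥ n • y` for some `n > 0`
implies the existence of a catalyst `z` with `x + z ≥ y + z`. -/
theorem stmt4 {A : Type*} [AddCommMonoid A] [PartialOrder A] [IsOrderedAddMonoid A]
    (j : A → A → A) (u : A)
    (hcomm : ∀ a b, j a b = j b a)
    (hassoc : ∀ a b c, j (j a b) c = j a (j b c))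
    (hunit : ∀ a, j u a = a)
    (hmono : ∀ a b c, a ≤ b → j a c ≤ j b c)
    (hdist : ∀ a b c, a + j b c = j (a + b) (a + c))
    {x y : A} {n : ℕ} (hn : 0 < n) (h : n • y ≤ n • x) :
    ∃ z : A, y + z ≤ x + z :=
  stmt4_general j hcomm hassoc hmono hdist hn h
end

section
/- Let A be an ordered commutative monoid with a second monoid operation ∨ compatible with the order such that + distributes over ∨. If A is cancellative, then A is torsion-free: nx ≥ ny for some positive integer n implies x ≥ y. -/
/-! Write `∨` for the second operation. For `n ≥ 2` there are `s` and `t` with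
`y + s = n•y ∨ t` and `x + s = n•x ∨ t`: morally `s = ⋁_{a+b=n-1} (a•y + b•x)` and `t` is the join
of the mixed terms `a•y + b•x` with `a + b = n`, `a, b ≥ 1`. Then `n•y ≤ n•x` gives
`y + s ≤ x + s`, and cancellation gives `y ≤ x`. -/

theorem exists_add_eq_join_nsmul {A : Type*} [AddCommMonoid A] (j : A → A → A)
    (hcomm : ∀ a b, j a b = j b a)
    (hassoc : ∀ a b c, j (j a b) c = j a (j b c))
    (hdist : ∀ a b c, a + j b c = j (a + b) (a + c))
    (x y : A) {n : ℕ} (hn : 2 ≤ n) :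
    ∃ s t, y + s = j (n • y) t ∧ x + s = j (n • x) t := by
  induction n, hn using Nat.le_induction with
  | base =>
    refine ⟨j x y, x + y, ?_, ?_⟩
    · rw [hdist, hcomm, two_nsmul, add_comm y x]
    · rw [hdist, two_nsmul]
  | succ n _ ih =>
    obtain ⟨s, t, hy, hx⟩ := ih
    refine ⟨j (y + s) (n • x), y + j (n • x) t, ?_, ?_⟩
    · calc y + j (y + s) (n • x)
          = j (y + (y + s)) (y + n • x) := hdist _ _ _
        _ = j (j ((n + 1) • y) (y + t)) (y + n • x) := by
          rw [hy, hdist, succ_nsmul']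
        _ = j ((n + 1) • y) (y + j (n • x) t) := by
          rw [hassoc, hdist y (n • x), hcomm (y + n • x)]
    · calc x + j (y + s) (n • x)
          = j (y + (x + s)) ((n + 1) • x) := by rw [hdist, succ_nsmul', add_left_comm]
        _ = j ((n + 1) • x) (y + j (n • x) t) := by rw [hx, hcomm]

theorem stmt5_general {A : Type*} [AddCommMonoid A] [PartialOrder A]
    (j : A → A → A)
    (hcomm : ∀ a b, j a b = j b a)
    (hassoc : ∀ a b c, j (j a b) c = j a (j b c))
    (hmono : ∀ a b c, a ≤ b → j a c ≤ j b c)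
    (hdist : ∀ a b c, a + j b c = j (a + b) (a + c))
    (hcanc : ∀ x y z : A, x + z ≤ y + z → x ≤ y)
    {x y : A} {n : ℕ} (hn : 0 < n) (h : n • y ≤ n • x) :
    y ≤ x := by
  obtain rfl | hn2 : n = 1 ∨ 2 ≤ n := by omega
  · simpa using h
  obtain ⟨s, t, hy, hx⟩ := exists_add_eq_join_nsmul j hcomm hassoc hdist x y hn2
  exact hcanc y x s (hy ▸ hx ▸ hmono _ _ t h)

/-- If an ordered commutative monoid `A` carries a second commutative monoid operation `∨`
(compatible with the order) over which `+` distributes, and `A` is cancellative, then `A`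
is torsion-free: `n • x ≥ n • y` for some `n > 0` implies `x ≥ y`. -/
theorem stmt5 {A : Type*} [AddCommMonoid A] [PartialOrder A] [IsOrderedAddMonoid A]
    (j : A → A → A) (u : A)
    (hcomm : ∀ a b, j a b = j b a)
    (hassoc : ∀ a b c, j (j a b) c = j a (j b c))
    (hunit : ∀ a, j u a = a)
    (hmono : ∀ a b c, a ≤ b → j a c ≤ j b c)
    (hdist : ∀ a b c, a + j b c = j (a + b) (a + c))
    (hcanc : ∀ x y z : A, x + z ≤ y + z → x ≤ y)
    {x y : A} {n : ℕ} (hn : 0 < n) (h : n • y ≤ n • x) :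
    y ≤ x :=
  stmt5_general j hcomm hassoc hmono hdist hcanc hn h
end

section
/- Let A be an ordered commutative monoid with a second monoid operation ∨ compatible with the order such that + distributes over ∨. Then the ordered abelian group oag(A) (obtained by first passing to the catalytic order x ⪰ y iff ∃z, x+z ≥ y+z, and then taking the group of formal differences) is torsion-free. -/
/-!
Write `n = m + 1` and `gᵢ = i • x + (n - i) • y + z`, so that `g₀ = n • y + z ≤ n • x + z = gₙ`.
With the catalyst `w = ⋁_{i ≤ m} (i • x + (m - i) • y)`, distributivity of `+` over `∨` gives
`y + (w + z) = g₀ ∨ ⋯ ∨ gₘ` and `x + (w + z) = g₁ ∨ ⋯ ∨ gₙ`; the two joins share `g₁, …, gₘ`,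
and replacing `g₀` by the larger `gₙ` turns the first into the second.
-/

section JoinRange

variable {A : Type*} (j : A → A → A)

def joinRange (g : ℕ → A) : ℕ → A
  | 0 => g 0
  | k + 1 => j (g (k + 1)) (joinRange g k)

theorem joinRange_congr {g g' : ℕ → A} :
    ∀ k, (∀ i ≤ k, g i = g' i) → joinRange j g k = joinRange j g' k
  | 0, h => h 0 le_rfl
  | k + 1, h => by
      rw [joinRange, joinRange, h (k + 1) le_rfl,
        joinRange_congr k fun i hi => h i (hi.trans k.le_succ)]

theorem add_joinRange [Add A] (hdist : ∀ a b c, a + j b c = j (a + b) (a + c))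
    (a : A) (g : ℕ → A) : ∀ k, a + joinRange j g k = joinRange j (fun i => a + g i) k
  | 0 => rfl
  | k + 1 => by rw [joinRange, hdist, add_joinRange hdist a g k]; rfl

variable {j}

theorem joinRange_succ_eq_join_shift
    (hcomm : ∀ a b, j a b = j b a) (hassoc : ∀ a b c, j (j a b) c = j a (j b c))
    (g : ℕ → A) : ∀ k, joinRange j g (k + 1) = j (joinRange j (fun i => g (i + 1)) k) (g 0)
  | 0 => by rw [joinRange, joinRange, joinRange, hcomm]
  | k + 1 => by
      rw [joinRange, joinRange_succ_eq_join_shift hcomm hassoc g k, ← hassoc]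
      rfl

theorem joinRange_le_joinRange_shift [Preorder A]
    (hcomm : ∀ a b, j a b = j b a) (hassoc : ∀ a b c, j (j a b) c = j a (j b c))
    (hmono : ∀ a b c, a ≤ b → j a c ≤ j b c) {g : ℕ → A} :
    ∀ {k}, g 0 ≤ g (k + 1) → joinRange j g k ≤ joinRange j (fun i => g (i + 1)) k
  | 0, h => h
  | k + 1, h => by
      rw [joinRange_succ_eq_join_shift hcomm hassoc, hcomm]
      exact hmono _ _ _ h

end JoinRange

theorem stmt6_general {A : Type*} [AddCommMonoid A] [PartialOrder A] [IsOrderedAddMonoid A]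
    (j : A → A → A)
    (hcomm : ∀ a b, j a b = j b a)
    (hassoc : ∀ a b c, j (j a b) c = j a (j b c))
    (hmono : ∀ a b c, a ≤ b → j a c ≤ j b c)
    (hdist : ∀ a b c, a + j b c = j (a + b) (a + c))
    {x y : A} {n : ℕ} (hn : 0 < n)
    (h : ∃ z : A, n • y + z ≤ n • x + z) :
    ∃ z : A, y + z ≤ x + z := by
  obtain ⟨z, hz⟩ := h
  obtain ⟨m, rfl⟩ := Nat.exists_eq_add_one_of_ne_zero hn.ne'
  set g : ℕ → A := fun i => i • x + (m + 1 - i) • y + z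
  set w := joinRange j (fun i => i • x + (m - i) • y) m
  have hy : y + (w + z) = joinRange j g m := by
    rw [add_comm w, ← add_assoc, add_joinRange j hdist]
    refine joinRange_congr j m fun i hi => ?_
    simp only [g, Nat.succ_sub hi, succ_nsmul]
    abel
  have hx : x + (w + z) = joinRange j (fun i => g (i + 1)) m := by
    rw [add_comm w, ← add_assoc, add_joinRange j hdist]
    refine joinRange_congr j m fun i _ => ?_
    simp only [g, Nat.add_sub_add_right, succ_nsmul]
    abel
  refine ⟨w + z, hy ▸ hx ▸ joinRange_le_joinRange_shift hcomm hassoc hmono ?_⟩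
  simpa [g] using hz

/-- If an ordered commutative monoid `A` carries a second commutative monoid operation `∨`
(compatible with the order) over which `+` distributes, then the ordered abelian group
`oag(A)` of formal differences with the catalytic ordering is torsion-free (unperforated):
if `n • (x - y) ≥ 0` in `oag(A)`, i.e. `n • x + z ≥ n • y + z` for some catalyst `z`,
with `n > 0`, then `x - y ≥ 0` in `oag(A)`, i.e. `x + z' ≥ y + z'` for some `z'`. -/
theorem stmt6 {A : Type*} [AddCommMonoid A] [PartialOrder A] [IsOrderedAddMonoid A]
    (j : A → A → A) (u : A)
    (hcomm : ∀ a b, j a b = j b a)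
    (hassoc : ∀ a b c, j (j a b) c = j a (j b c))
    (hunit : ∀ a, j u a = a)
    (hmono : ∀ a b c, a ≤ b → j a c ≤ j b c)
    (hdist : ∀ a b c, a + j b c = j (a + b) (a + c))
    {x y : A} {n : ℕ} (hn : 0 < n)
    (h : ∃ z : A, n • y + z ≤ n • x + z) :
    ∃ z : A, y + z ≤ x + z :=
  stmt6_general j hcomm hassoc hmono hdist hn h
end

section
/- Hahn–Banach separation for cones: In an Archimedean ordered ℚ-vector space W, an element x satisfies x ≥ 0 if and only if f(x) ≥ 0 for every functional f : W → ℝ (i.e., every ℚ-linear order-preserving map to ℝ). -/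
/-- `U` is absolutely convex and absorbent in an ordered ℚ-vector space. -/
def AbsConvexAbsorbent {V : Type*} [AddCommGroup V] [PartialOrder V] [IsOrderedAddMonoid V] [Module ℚ V] (U : Set V) : Prop :=
  (∀ x ∈ U, ∀ y ∈ U, ∀ l : ℚ, 0 ≤ l → l ≤ 1 → l • x + (1 - l) • y ∈ U) ∧
  (∀ x : V, 0 ≤ x → x ∈ U) ∧
  (∀ x : V, ∃ m : ℚ, 0 < m ∧ m • x ∈ U)

/-!
If `x` is not positive, the Archimedean property yields an absolutely convex absorbent `U`
containing the positive cone but not `x`. The gauge `μ` of `U` (with rational scalars) is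
sublinear, vanishes on the positive cone and has `μ x ≥ 1`, so for a ℚ-linear `g ≤ μ` with
`g x = μ x` the functional `-g` is nonnegative on the cone and negative at `x`.

Such a `g` exists by the Hahn–Banach theorem over `ℚ`, obtained from Zorn's lemma: a minimal
sublinear functional `p` is linear, because `v ↦ inf_{t ≥ 0} (p (v + t • y) - t * p y)` is a
sublinear functional below `p` that sends `-y` to at most `-p y`.
-/

section

open Set Pointwise

variable {E : Type*} [AddCommGroup E] [Module ℚ E]

structure IsSublinear (p : E → ℝ) : Prop where
  map_smul_of_pos : ∀ c : ℚ, 0 < c → ∀ x, p (c • x) = c * p x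
  map_add_le : ∀ x y, p (x + y) ≤ p x + p y

namespace IsSublinear

variable {p : E → ℝ}

theorem map_zero (hp : IsSublinear p) : p 0 = 0 := by
  have h := hp.map_smul_of_pos 2 two_pos 0
  rw [smul_zero] at h
  push_cast at h
  linarith

theorem map_smul_of_nonneg (hp : IsSublinear p) {c : ℚ} (hc : 0 ≤ c) (x : E) :
    p (c • x) = c * p x := by
  rcases hc.eq_or_lt with rfl | hc
  · simp [hp.map_zero]
  · exact hp.map_smul_of_pos c hc x

theorem neg_map_neg_le (hp : IsSublinear p) (x : E) : -p (-x) ≤ p x := by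
  have h := hp.map_add_le x (-x)
  rw [add_neg_cancel, hp.map_zero] at h
  linarith

end IsSublinear

theorem isSublinear_sInf {A : E → Set ℝ} (hne : ∀ v, (A v).Nonempty) (hbdd : ∀ v, BddBelow (A v))
    (hsmul : ∀ c : ℚ, 0 < c → ∀ v, A (c • v) = (c : ℝ) • A v)
    (hadd : ∀ u v, ∀ a ∈ A u, ∀ b ∈ A v, ∃ d ∈ A (u + v), d ≤ a + b) :
    IsSublinear fun v => sInf (A v) where
  map_smul_of_pos c hc v := by
    rw [hsmul c hc, Real.sInf_smul_of_nonneg (by positivity), smul_eq_mul]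
  map_add_le u v := by
    rw [← csInf_add (hne u) (hbdd u) (hne v) (hbdd v)]
    refine le_csInf ((hne u).add (hne v)) ?_
    rintro _ ⟨a, ha, b, hb, rfl⟩
    obtain ⟨d, hd, hdab⟩ := hadd u v a ha b hb
    exact (csInf_le (hbdd _) hd).trans hdab

noncomputable def rayInf (p : E → ℝ) (y v : E) : ℝ :=
  sInf ((fun t : ℚ => p (v + t • y) - t * p y) '' Ici 0)

namespace IsSublinear

variable {p : E → ℝ}

theorem bddBelow_rayInf (hp : IsSublinear p) (y v : E) :
    BddBelow ((fun t : ℚ => p (v + t • y) - t * p y) '' Ici 0) := by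
  refine ⟨-p (-v), ?_⟩
  rintro _ ⟨t, ht, rfl⟩
  have h := hp.map_add_le (v + t • y) (-v)
  rw [add_neg_cancel_comm, hp.map_smul_of_nonneg ht] at h
  simp only
  linarith

theorem rayInf_le (hp : IsSublinear p) (y v : E) : rayInf p y v ≤ p v :=
  csInf_le_of_le (hp.bddBelow_rayInf y v) ⟨0, self_mem_Ici, rfl⟩ (by simp)

theorem rayInf_neg_self_le (hp : IsSublinear p) (y : E) : rayInf p y (-y) ≤ -p y :=
  csInf_le_of_le (hp.bddBelow_rayInf y (-y)) ⟨1, mem_Ici.2 zero_le_one, rfl⟩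
    (by simp [hp.map_zero])

theorem isSublinear_rayInf (hp : IsSublinear p) (y : E) : IsSublinear (rayInf p y) := by
  refine isSublinear_sInf (fun v => ⟨_, 0, self_mem_Ici, rfl⟩) (hp.bddBelow_rayInf y) ?_ ?_
  · intro c hc v
    ext r
    simp only [mem_image, mem_Ici, mem_smul_set, smul_eq_mul]
    constructor
    · rintro ⟨t, ht, rfl⟩
      refine ⟨_, ⟨c⁻¹ * t, by positivity, rfl⟩, ?_⟩
      rw [mul_sub, ← hp.map_smul_of_pos c hc, smul_add, smul_smul, ← mul_assoc,
        mul_inv_cancel₀ hc.ne']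
      push_cast
      field_simp
    · rintro ⟨_, ⟨t, ht, rfl⟩, rfl⟩
      refine ⟨c * t, by positivity, ?_⟩
      rw [mul_sub, ← hp.map_smul_of_pos c hc, smul_add, smul_smul]
      push_cast
      ring
  · rintro u v _ ⟨s, hs, rfl⟩ _ ⟨t, ht, rfl⟩
    refine ⟨_, ⟨s + t, mem_Ici.2 (add_nonneg hs ht), rfl⟩, ?_⟩
    have h := hp.map_add_le (u + s • y) (v + t • y)
    simp only [add_smul, Rat.cast_add] at h ⊢
    rw [show u + v + (s • y + t • y) = u + s • y + (v + t • y) by abel]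
    linarith

theorem bddBelow_image_eval_of_isChain {c : Set (E → ℝ)} (hc : ∀ q ∈ c, IsSublinear q)
    (hchain : IsChain (· ≤ ·) c) {q₀ : E → ℝ} (hq₀ : q₀ ∈ c) (v : E) :
    BddBelow ((fun q => q v) '' c) := by
  refine ⟨-q₀ (-v), ?_⟩
  rintro _ ⟨q, hq, rfl⟩
  rcases hchain.total hq hq₀ with h | h
  · exact (neg_le_neg (h (-v))).trans ((hc q hq).neg_map_neg_le v)
  · exact ((hc q₀ hq₀).neg_map_neg_le v).trans (h v)

theorem isSublinear_sInf_of_isChain {c : Set (E → ℝ)} (hc : ∀ q ∈ c, IsSublinear q)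
    (hchain : IsChain (· ≤ ·) c) (hne : c.Nonempty) :
    IsSublinear fun v => sInf ((fun q => q v) '' c) := by
  obtain ⟨q₀, hq₀⟩ := hne
  refine isSublinear_sInf (fun v => ⟨_, q₀, hq₀, rfl⟩)
    (bddBelow_image_eval_of_isChain hc hchain hq₀) ?_ ?_
  · intro a ha v
    ext r
    simp only [mem_image, mem_smul_set, smul_eq_mul]
    constructor
    · rintro ⟨q, hq, rfl⟩
      exact ⟨q v, ⟨q, hq, rfl⟩, ((hc q hq).map_smul_of_pos a ha v).symm⟩
    · rintro ⟨_, ⟨q, hq, rfl⟩, rfl⟩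
      exact ⟨q, hq, (hc q hq).map_smul_of_pos a ha v⟩
  · rintro u v _ ⟨q₁, hq₁, rfl⟩ _ ⟨q₂, hq₂, rfl⟩
    rcases hchain.total hq₁ hq₂ with h | h
    · exact ⟨q₁ (u + v), ⟨q₁, hq₁, rfl⟩, ((hc q₁ hq₁).map_add_le u v).trans (by linarith [h v])⟩
    · exact ⟨q₂ (u + v), ⟨q₂, hq₂, rfl⟩, ((hc q₂ hq₂).map_add_le u v).trans (by linarith [h u])⟩

theorem exists_minimal_le (hp : IsSublinear p) : ∃ m ≤ p, Minimal IsSublinear m := by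
  refine zorn_le_nonempty₀ (α := (E → ℝ)ᵒᵈ) {q | IsSublinear (OrderDual.ofDual q)}
    (fun c hc hchain q hq => ?_) (OrderDual.toDual p) hp
  refine ⟨OrderDual.toDual fun v => sInf ((fun q : (E → ℝ)ᵒᵈ => OrderDual.ofDual q v) '' c),
    ?_, ?_⟩
  · exact isSublinear_sInf_of_isChain hc hchain.symm ⟨q, hq⟩
  · intro z hz v
    exact csInf_le (bddBelow_image_eval_of_isChain hc hchain.symm hz v) ⟨z, hz, rfl⟩

theorem map_neg_of_minimal (hp : Minimal IsSublinear p) (y : E) : p (-y) = -p y := by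
  have hle : rayInf p y ≤ p := hp.1.rayInf_le y
  have heq : rayInf p y = p := le_antisymm hle (hp.2 (hp.1.isSublinear_rayInf y) hle)
  refine le_antisymm ?_ ?_
  · exact (congrFun heq (-y)).symm.trans_le (hp.1.rayInf_neg_self_le y)
  · linarith [hp.1.neg_map_neg_le y]

def toLinearMap (hp : IsSublinear p) (hneg : ∀ y, p (-y) = -p y) : E →ₗ[ℚ] ℝ where
  toFun := p
  map_add' x y := by
    have h := hp.map_add_le (-x) (-y)
    rw [← neg_add, hneg, hneg, hneg] at h
    exact le_antisymm (hp.map_add_le x y) (by linarith)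
  map_smul' c x := by
    rw [RingHom.id_apply, Rat.smul_def]
    rcases le_or_gt 0 c with hc | hc
    · exact hp.map_smul_of_nonneg hc x
    · have h := hp.map_smul_of_pos (-c) (neg_pos.2 hc) (-x)
      rw [neg_smul_neg, hneg] at h
      push_cast at h
      linarith

theorem exists_linearMap_le (hp : IsSublinear p) : ∃ g : E →ₗ[ℚ] ℝ, ∀ v, g v ≤ p v := by
  obtain ⟨m, hmp, hm⟩ := hp.exists_minimal_le
  exact ⟨hm.1.toLinearMap (map_neg_of_minimal hm), hmp⟩

theorem exists_linearMap_le_apply_eq (hp : IsSublinear p) (v : E) :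
    ∃ g : E →ₗ[ℚ] ℝ, (∀ w, g w ≤ p w) ∧ g v = p v := by
  obtain ⟨g, hg⟩ := (hp.isSublinear_rayInf v).exists_linearMap_le
  have hgv : -g v ≤ -p v := by
    simpa only [map_neg] using (hg (-v)).trans (hp.rayInf_neg_self_le v)
  exact ⟨g, fun w => (hg w).trans (hp.rayInf_le v w),
    le_antisymm ((hg v).trans (hp.rayInf_le v v)) (neg_le_neg_iff.1 hgv)⟩

end IsSublinear

/-- The Minkowski gauge with rational scalars (Mathlib's `gauge` needs a real vector space). -/
noncomputable def ratGauge (U : Set E) (w : E) : ℝ :=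
  sInf (((↑) : ℚ → ℝ) '' {q : ℚ | 0 < q ∧ q⁻¹ • w ∈ U})

section RatGauge

variable {U : Set E}

theorem bddBelow_ratGauge (U : Set E) (w : E) :
    BddBelow (((↑) : ℚ → ℝ) '' {q : ℚ | 0 < q ∧ q⁻¹ • w ∈ U}) :=
  ⟨0, by rintro _ ⟨q, hq, rfl⟩; exact_mod_cast hq.1.le⟩

theorem nonempty_ratGauge (habs : ∀ x : E, ∃ m : ℚ, 0 < m ∧ m • x ∈ U) (w : E) :
    (((↑) : ℚ → ℝ) '' {q : ℚ | 0 < q ∧ q⁻¹ • w ∈ U}).Nonempty :=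
  let ⟨m, hm, hmw⟩ := habs w
  ⟨_, m⁻¹, ⟨inv_pos.2 hm, by rwa [inv_inv]⟩, rfl⟩

theorem Convex.inv_add_smul_add_mem (hU : Convex ℚ U) {a b : ℚ} (ha : 0 < a) (hb : 0 < b)
    {u v : E} (hu : a⁻¹ • u ∈ U) (hv : b⁻¹ • v ∈ U) : (a + b)⁻¹ • (u + v) ∈ U := by
  convert convex_iff_div.1 hU hu hv ha.le hb.le (add_pos ha hb) using 1
  rw [smul_smul, smul_smul, smul_add]
  congr 2 <;> field_simp

theorem isSublinear_ratGauge (hU : Convex ℚ U) (habs : ∀ x : E, ∃ m : ℚ, 0 < m ∧ m • x ∈ U) :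
    IsSublinear (ratGauge U) := by
  refine isSublinear_sInf (nonempty_ratGauge habs) (bddBelow_ratGauge U) ?_ ?_
  · intro c hc w
    ext r
    simp only [mem_image, mem_ofPred_eq, mem_smul_set, smul_eq_mul]
    constructor
    · rintro ⟨q, ⟨hq, hqw⟩, rfl⟩
      refine ⟨_, ⟨c⁻¹ * q, ⟨by positivity, ?_⟩, rfl⟩, by push_cast; field_simp⟩
      rwa [mul_inv, inv_inv, mul_comm, ← smul_smul]
    · rintro ⟨_, ⟨q, ⟨hq, hqw⟩, rfl⟩, rfl⟩
      refine ⟨c * q, ⟨by positivity, ?_⟩, by push_cast; ring⟩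
      rw [smul_smul]
      convert hqw using 2
      field_simp
  · rintro u v _ ⟨a, ⟨ha, hau⟩, rfl⟩ _ ⟨b, ⟨hb, hbv⟩, rfl⟩
    exact ⟨_, ⟨a + b, ⟨add_pos ha hb, hU.inv_add_smul_add_mem ha hb hau hbv⟩, rfl⟩,
      by push_cast; rfl⟩

theorem one_le_ratGauge (hU : Convex ℚ U) (habs : ∀ x : E, ∃ m : ℚ, 0 < m ∧ m • x ∈ U)
    (h0 : (0 : E) ∈ U) {x : E} (hx : x ∉ U) : 1 ≤ ratGauge U x := by
  refine le_csInf (nonempty_ratGauge habs x) ?_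
  rintro _ ⟨q, ⟨hq, hqx⟩, rfl⟩
  by_contra! hq1
  have h := hU hqx h0 hq.le (sub_nonneg.2 (by exact_mod_cast hq1.le)) (add_sub_cancel q 1)
  rw [smul_smul, mul_inv_cancel₀ hq.ne', one_smul, smul_zero, add_zero] at h
  exact hx h

theorem ratGauge_eq_zero {y : E} (hy : ∀ q : ℚ, 0 < q → q • y ∈ U) : ratGauge U y = 0 := by
  refine le_antisymm ?_ (Real.sInf_nonneg ?_)
  · by_contra! hpos
    obtain ⟨q, hq0, hq⟩ := exists_rat_btwn hpos
    have hq0' : (0 : ℚ) < q := by exact_mod_cast hq0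
    exact hq.not_ge <| csInf_le (bddBelow_ratGauge U y) ⟨q, ⟨hq0', hy _ (inv_pos.2 hq0')⟩, rfl⟩
  · rintro _ ⟨q, ⟨hq, -⟩, rfl⟩
    exact_mod_cast hq.le

end RatGauge

end

theorem AbsConvexAbsorbent.convex {V : Type*} [AddCommGroup V] [PartialOrder V]
    [IsOrderedAddMonoid V] [Module ℚ V] {U : Set V} (hU : AbsConvexAbsorbent U) :
    Convex ℚ U := by
  intro u hu v hv a b ha hb hab
  obtain rfl : b = 1 - a := eq_sub_of_add_eq' hab
  exact hU.1 u hu v hv a ha (sub_nonneg.1 hb)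

/-- Hahn–Banach separation for cones: in an Archimedean ordered ℚ-vector space `W`, one has
`x ≥ 0` iff `f x ≥ 0` for every functional `f` (ℚ-linear, order-preserving map `W → ℝ`). -/
theorem stmt13 {W : Type*} [AddCommGroup W] [PartialOrder W] [IsOrderedAddMonoid W] [Module ℚ W]
    (hsmul : ∀ (q : ℚ) (x : W), 0 ≤ q → 0 ≤ x → 0 ≤ q • x)
    (harch : ∀ x : W, 0 ≤ x ↔ ∀ U : Set W, AbsConvexAbsorbent U → x ∈ U)
    (x : W) :
    0 ≤ x ↔ ∀ f : W →ₗ[ℚ] ℝ, (∀ y : W, 0 ≤ y → 0 ≤ f y) → 0 ≤ f x := by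
  refine ⟨fun hx f hf => hf x hx, fun hf => ?_⟩
  by_contra hx
  obtain ⟨U, hU, hxU⟩ : ∃ U, AbsConvexAbsorbent U ∧ x ∉ U := by
    simpa [harch x] using hx
  obtain ⟨g, hg, hgx⟩ :=
    (isSublinear_ratGauge hU.convex hU.2.2).exists_linearMap_le_apply_eq x
  have hpos : ∀ y : W, 0 ≤ y → 0 ≤ (-g) y := fun y hy => by
    have hgy := hg y
    rw [ratGauge_eq_zero fun q hq => hU.2.1 _ (hsmul q y hq.le hy)] at hgy
    simpa using hgy
  have hgx_neg := hf (-g) hpos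
  have hμx := one_le_ratGauge hU.convex hU.2.2 (hU.2.1 0 le_rfl) hxU
  rw [LinearMap.neg_apply, hgx] at hgx_neg
  linarith
end

section
/- Let V be an ordered ℚ-vector space with a generator g. For x ∈ V, the following are equivalent: (1) x + εg ≥ 0 for all positive rationals ε; (2) f(x) ≥ 0 for all functionals f : V → ℝ. -/
/-!
One direction is immediate: a positive functional `f` gives `f x + ε f g ≥ 0` for all `ε > 0`.
Conversely, if `w = x + ε₀ • g` is not `≥ 0`, consider the cone `V₊ - ℚ≥0 • w`. Because `g` is a
generator, every translate of this cone meets `ℚ • g`, and `q • g` lies in the cone only for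
`q ≥ 0` (otherwise `w ≥ 0`). The M. Riesz extension theorem extends `q • g ↦ q` to a functional
`f` that is nonnegative on the cone, so `f` is positive, `f g = 1` and `f w ≤ 0`, whence
`f x ≤ -ε₀ < 0`.
-/

open Set Submodule

-- Mathlib's `riesz_extension` is stated for real vector spaces; its Zorn argument works over `ℚ`.

namespace LinearPMap

variable {E : Type*} [AddCommGroup E] [Module ℚ E] {s : ConvexCone ℚ E} {f : E →ₗ.[ℚ] ℝ}

theorem exists_nonneg_extension_value (nonneg : ∀ x : f.domain, (x : E) ∈ s → 0 ≤ f x)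
    (dense : ∀ y, ∃ x : f.domain, (x : E) + y ∈ s) (y : E) :
    ∃ c : ℝ, (∀ x : f.domain, (x : E) + y ∈ s → -f x ≤ c) ∧
      ∀ x : f.domain, (x : E) - y ∈ s → c ≤ f x := by
  have hneg : {x : f.domain | (x : E) - y ∈ s}.Nonempty := by
    obtain ⟨x, hx⟩ := dense (-y)
    exact ⟨x, show (x : E) - y ∈ s by rwa [sub_eq_add_neg]⟩
  obtain ⟨c, hlower, hupper⟩ := exists_between_of_forall_le
    (s := (fun x => -f x) '' {x : f.domain | (x : E) + y ∈ s})
    (t := f '' {x : f.domain | (x : E) - y ∈ s}) (Nonempty.image _ (dense y))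
    (hneg.image _) <| by
      rintro _ ⟨x, hx, rfl⟩ _ ⟨x', hx', rfl⟩
      have hsum : ((x + x' : f.domain) : E) ∈ s := by
        simpa using s.add_mem hx hx'
      linarith [nonneg _ hsum, f.map_add x x']
  exact ⟨c, fun x hx => hlower (mem_image_of_mem _ hx), fun x hx => hupper (mem_image_of_mem _ hx)⟩

theorem nonneg_supSpanSingleton (nonneg : ∀ x : f.domain, (x : E) ∈ s → 0 ≤ f x) {y : E}
    (hy : y ∉ f.domain) {c : ℝ} (hc_lower : ∀ x : f.domain, (x : E) + y ∈ s → -f x ≤ c)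
    (hc_upper : ∀ x : f.domain, (x : E) - y ∈ s → c ≤ f x) :
    ∀ z : (f.supSpanSingleton y c hy).domain, (z : E) ∈ s → 0 ≤ f.supSpanSingleton y c hy z := by
  rintro ⟨_, hz⟩ hzs
  obtain ⟨x, hx, _, hry, rfl⟩ := mem_sup.1 hz
  obtain ⟨r, rfl⟩ := mem_span_singleton.1 hry
  replace hzs : x + r • y ∈ s := hzs
  rw [supSpanSingleton_apply_mk _ _ _ _ _ hx, RingHom.id_apply, Rat.smul_def]
  -- scaling `x + r • y` by `|r|⁻¹` brings it under the bound on `c` matching the sign of `r`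
  rcases lt_trichotomy r 0 with hr | rfl | hr
  · have hneg : 0 < -r := neg_pos.2 hr
    have hmem : (((-r)⁻¹ • ⟨x, hx⟩ : f.domain) : E) - y ∈ s := by
      convert s.smul_mem (inv_pos.2 hneg) hzs using 1
      show (-r)⁻¹ • x - y = (-r)⁻¹ • (x + r • y)
      rw [smul_add, smul_smul, inv_neg, neg_mul, inv_mul_cancel₀ hr.ne, neg_one_smul, sub_eq_add_neg]
    have := hc_upper _ hmem
    rw [map_smul, Rat.smul_def, Rat.cast_inv, Rat.cast_neg,
      le_inv_mul_iff₀ (by exact_mod_cast hneg)] at this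
    linarith
  · simpa using nonneg ⟨x, hx⟩ (by simpa using hzs)
  · have hmem : ((r⁻¹ • ⟨x, hx⟩ : f.domain) : E) + y ∈ s := by
      convert s.smul_mem (inv_pos.2 hr) hzs using 1
      show r⁻¹ • x + y = r⁻¹ • (x + r • y)
      rw [smul_add, smul_smul, inv_mul_cancel₀ hr.ne', one_smul]
    have := hc_lower _ hmem
    rw [map_smul, Rat.smul_def, Rat.cast_inv, ← mul_neg, inv_mul_le_iff₀ (by exact_mod_cast hr)] at this
    linarith

theorem nonneg_sSup {c : Set (E →ₗ.[ℚ] ℝ)} (hne : c.Nonempty) (hc : DirectedOn (· ≤ ·) c)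
    (nonneg : ∀ f ∈ c, ∀ x : f.domain, (x : E) ∈ s → 0 ≤ f x) :
    ∀ x : (LinearPMap.sSup c hc).domain, (x : E) ∈ s → 0 ≤ LinearPMap.sSup c hc x := by
  rintro ⟨x, hx⟩ hxs
  obtain ⟨f, hf, hxf⟩ := (mem_domain_sSup_iff hne hc).1 hx
  rw [LinearPMap.sSup_apply hc hf ⟨x, hxf⟩]
  exact nonneg f hf _ hxs

theorem exists_nonneg_extension_domain_eq_top (nonneg : ∀ x : f.domain, (x : E) ∈ s → 0 ≤ f x)
    (dense : ∀ y, ∃ x : f.domain, (x : E) + y ∈ s) :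
    ∃ g, f ≤ g ∧ g.domain = ⊤ ∧ ∀ x : g.domain, (x : E) ∈ s → 0 ≤ g x := by
  obtain ⟨g, hfg, hg⟩ := zorn_le_nonempty₀ {g : E →ₗ.[ℚ] ℝ | ∀ x : g.domain, (x : E) ∈ s → 0 ≤ g x}
    (fun c hcs hchain g hg => ⟨_, nonneg_sSup ⟨g, hg⟩ hchain.directedOn hcs,
      fun _ => LinearPMap.le_sSup _⟩) f nonneg
  refine ⟨g, hfg, ?_, hg.prop⟩
  by_contra hdom
  obtain ⟨y, -, hy⟩ := SetLike.exists_of_lt (lt_top_iff_ne_top.2 hdom)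
  have g_dense (z : E) : ∃ x : g.domain, (x : E) + z ∈ s :=
    let ⟨x, hx⟩ := dense z
    ⟨Submodule.inclusion hfg.1 x, hx⟩
  obtain ⟨c, hc_lower, hc_upper⟩ := exists_nonneg_extension_value hg.prop g_dense y
  have hg_eq := hg.eq_of_ge (nonneg_supSpanSingleton hg.prop hy hc_lower hc_upper)
    (g.left_le_sup _ _)
  exact hy (hg_eq.le.1 (mem_sup_right (mem_span_singleton_self y)))

end LinearPMap

theorem riesz_extension_rat {E : Type*} [AddCommGroup E] [Module ℚ E] (s : ConvexCone ℚ E)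
    (f : E →ₗ.[ℚ] ℝ) (nonneg : ∀ x : f.domain, (x : E) ∈ s → 0 ≤ f x)
    (dense : ∀ y, ∃ x : f.domain, (x : E) + y ∈ s) :
    ∃ g : E →ₗ[ℚ] ℝ, (∀ x : f.domain, g x = f x) ∧ ∀ x ∈ s, 0 ≤ g x := by
  obtain ⟨⟨_, g⟩, ⟨-, hfg⟩, rfl, hg⟩ := f.exists_nonneg_extension_domain_eq_top nonneg dense
  exact ⟨g.comp (LinearMap.id.codRestrict ⊤ fun _ => trivial), fun x => (hfg rfl).symm,
    fun x hx => hg ⟨x, trivial⟩ hx⟩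

theorem ConvexCone.exists_nonneg_linearMap_eq_one {E : Type*} [AddCommGroup E] [Module ℚ E]
    (s : ConvexCone ℚ E) {u : E} (dense : ∀ y, ∃ q : ℚ, q • u + y ∈ s)
    (hu : ∀ q : ℚ, q • u ∈ s → 0 ≤ q) :
    ∃ f : E →ₗ[ℚ] ℝ, f u = 1 ∧ ∀ y ∈ s, 0 ≤ f y := by
  have hu₀ : u ≠ 0 := by
    rintro rfl
    obtain ⟨q, hq⟩ := dense 0
    have := hu (-1) (by simpa using hq)
    norm_num at this
  set f₀ : E →ₗ.[ℚ] ℝ := LinearPMap.mkSpanSingleton u (1 : ℝ) hu₀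
  have hf₀ (q : ℚ) (h : q • u ∈ f₀.domain) : f₀ ⟨q • u, h⟩ = q :=
    (LinearPMap.mkSpanSingleton'_apply u (1 : ℝ) _ q h).trans (by simp)
  have hf₀_nonneg : ∀ z : f₀.domain, (z : E) ∈ s → 0 ≤ f₀ z := by
    rintro ⟨_, hz⟩ hzs
    obtain ⟨q, rfl⟩ := mem_span_singleton.1 hz
    exact (hf₀ q hz).ge.trans' (Rat.cast_nonneg.2 (hu q hzs))
  have hf₀_dense (y : E) : ∃ z : f₀.domain, (z : E) + y ∈ s :=
    let ⟨q, hq⟩ := dense y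
    ⟨⟨q • u, smul_mem _ q (mem_span_singleton_self u)⟩, hq⟩
  obtain ⟨f, hff₀, hf⟩ := riesz_extension_rat s f₀ hf₀_nonneg hf₀_dense
  refine ⟨f, ?_, hf⟩
  simpa using (hff₀ ⟨(1 : ℚ) • u, smul_mem _ 1 (mem_span_singleton_self u)⟩).trans (hf₀ 1 _)

theorem nonneg_of_forall_rat_pos_add_mul_nonneg {a b : ℝ} (hb : 0 ≤ b)
    (h : ∀ e : ℚ, 0 < e → 0 ≤ a + e * b) : 0 ≤ a := by
  by_contra! ha
  have hb₁ : 0 < b + 1 := by linarith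
  obtain ⟨e, he, hea⟩ := exists_rat_btwn (div_pos (neg_pos.2 ha) hb₁)
  rw [lt_div_iff₀ hb₁] at hea
  nlinarith [h e (by exact_mod_cast he)]

section OrderedModule

variable {V : Type*} [AddCommGroup V] [PartialOrder V] [IsOrderedAddMonoid V] [Module ℚ V]
  [PosSMulMono ℚ V]

def nonnegSubRay (w : V) : ConvexCone ℚ V where
  carrier := {y | ∃ t : ℚ, 0 ≤ t ∧ 0 ≤ y + t • w}
  smul_mem' c hc y := fun ⟨t, ht, hy⟩ =>
    ⟨c * t, mul_nonneg hc.le ht, by simpa [smul_add, mul_smul] using smul_nonneg hc.le hy⟩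
  add_mem' y := fun ⟨t, ht, hy⟩ z ⟨t', ht', hz⟩ =>
    ⟨t + t', add_nonneg ht ht', by simpa [add_smul, add_add_add_comm] using add_nonneg hy hz⟩

theorem exists_nonneg_linearMap_eq_one_apply_nonpos {g : V} (hg : 0 ≤ g)
    (hgen : ∀ x : V, ∃ n : ℕ, x ≤ n • g) {w : V} (hw : ¬ 0 ≤ w) :
    ∃ f : V →ₗ[ℚ] ℝ, (∀ y, 0 ≤ y → 0 ≤ f y) ∧ f g = 1 ∧ f w ≤ 0 := by
  have hdense (y : V) : ∃ q : ℚ, q • g + y ∈ nonnegSubRay w := by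
    obtain ⟨n, hn⟩ := hgen (-y)
    exact ⟨n, 0, le_rfl, by simpa [Nat.cast_smul_eq_nsmul, neg_le_iff_add_nonneg] using hn⟩
  have hg_pos (q : ℚ) (hq : q • g ∈ nonnegSubRay w) : 0 ≤ q := by
    obtain ⟨t, ht, hqt⟩ := hq
    by_contra! hq₀
    rcases ht.lt_or_eq with ht | rfl
    · have htw : 0 ≤ t • w := by
        have := add_nonneg hqt (smul_nonneg (neg_nonneg.2 hq₀.le) hg)
        rwa [neg_smul, add_neg_cancel_comm] at this
      exact hw (nonneg_of_smul_nonneg_of_pos_left htw ht)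
    · have hg_nonpos : g ≤ 0 := (smul_le_smul_iff_of_neg_left hq₀).1 (by simpa using hqt)
      obtain ⟨n, hn⟩ := hgen (-w)
      rw [le_antisymm hg_nonpos hg, smul_zero, neg_nonpos] at hn
      exact hw hn
  obtain ⟨f, hfg, hf⟩ := (nonnegSubRay w).exists_nonneg_linearMap_eq_one hdense hg_pos
  refine ⟨f, fun y hy => hf y ⟨0, le_rfl, by simpa using hy⟩, hfg, ?_⟩
  simpa using hf (-w) ⟨1, zero_le_one, by simp⟩

end OrderedModule

/-- In an ordered ℚ-vector space `V` with generator `g`, for `x ∈ V` the following are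
equivalent: (1) `x + ε • g ≥ 0` for all rationals `ε > 0`; (2) `f x ≥ 0` for every functional
`f : V → ℝ` (ℚ-linear and order-preserving). -/
theorem stmt14 {V : Type*} [AddCommGroup V] [PartialOrder V] [IsOrderedAddMonoid V] [Module ℚ V]
    (hsmul : ∀ (q : ℚ) (x : V), 0 ≤ q → 0 ≤ x → 0 ≤ q • x)
    (g : V) (hg : 0 ≤ g) (hgen : ∀ x : V, ∃ n : ℕ, x ≤ n • g)
    (x : V) :
    (∀ e : ℚ, 0 < e → 0 ≤ x + e • g) ↔
    (∀ f : V →ₗ[ℚ] ℝ, (∀ y : V, 0 ≤ y → 0 ≤ f y) → 0 ≤ f x) := by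
  have : PosSMulMono ℚ V := .of_smul_nonneg fun q hq y hy => hsmul q y hq hy
  refine ⟨fun hx f hf => ?_, fun hf => ?_⟩
  · refine nonneg_of_forall_rat_pos_add_mul_nonneg (hf g hg) fun e he => ?_
    simpa [Rat.smul_def] using hf _ (hx e he)
  · by_contra! ⟨e, he, hxe⟩
    obtain ⟨f, hf_nonneg, hfg, hfw⟩ := exists_nonneg_linearMap_eq_one_apply_nonpos hg hgen hxe
    rw [map_add, map_smul, hfg, Rat.smul_def, mul_one] at hfw
    linarith [hf f hf_nonneg, (Rat.cast_pos (K := ℝ)).2 he]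
end

section
/- Rate composition: For elements x, y, z of an ordered commutative monoid, R_max(x→z) ≥ R_max(x→y) · R_max(y→z), where R_max(x→y) := sup{ m/n : m, n ∈ ℕ, nx ≥ my } with conventions m/0 = ∞ for m > 0 and 0/0 = 0. -/
open scoped ENNReal

/-- The maximal rate `R_max(x→y) = sup { m/n : n • x ≥ m • y }` in the extended nonnegative
reals (where the conventions `m/0 = ∞` for `m > 0` and `0/0 = 0` are those of `ℝ≥0∞`). -/
noncomputable def Rmax {A : Type*} [AddCommMonoid A] [PartialOrder A] [IsOrderedAddMonoid A] (x y : A) : ℝ≥0∞ :=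
  sSup {r : ℝ≥0∞ | ∃ n m : ℕ, ¬(n = 0 ∧ m = 0) ∧ m • y ≤ n • x ∧ r = (m : ℝ≥0∞) / (n : ℝ≥0∞)}

theorem ENNReal.sSup_mul_sSup_le {s t : Set ℝ≥0∞} {c : ℝ≥0∞} (h : ∀ a ∈ s, ∀ b ∈ t, a * b ≤ c) :
    sSup s * sSup t ≤ c := by
  rw [ENNReal.sSup_mul]
  refine iSup₂_le fun a ha => ?_
  rw [ENNReal.mul_sSup]
  exact iSup₂_le (h a ha)

theorem ENNReal.div_mul_div_comm {a b c d : ℝ≥0∞} (hb : b ≠ ∞) (hd : d ≠ ∞) :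
    a / b * (c / d) = a * c / (b * d) := by
  simp only [div_eq_mul_inv, ENNReal.mul_inv (Or.inr hd) (Or.inl hb)]
  ring

theorem mul_nsmul_le_mul_nsmul {A : Type*} [AddCommMonoid A] [Preorder A] [AddLeftMono A]
    {x y z : A} {n m m' k : ℕ} (hxy : m • y ≤ n • x) (hyz : k • z ≤ m' • y) :
    (m * k) • z ≤ (n * m') • x :=
  calc (m * k) • z = m • k • z := mul_nsmul' z m k
    _ ≤ m • m' • y := nsmul_le_nsmul_right hyz m
    _ = m' • m • y := (nsmul_left_comm y m m').symm
    _ ≤ m' • n • x := nsmul_le_nsmul_right hxy m'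
    _ = (n * m') • x := by rw [← mul_nsmul', mul_comm]

theorem div_le_Rmax {A : Type*} [AddCommMonoid A] [PartialOrder A] [IsOrderedAddMonoid A]
    {x y : A} {n m : ℕ} (hnm : ¬(n = 0 ∧ m = 0)) (h : m • y ≤ n • x) :
    (m : ℝ≥0∞) / n ≤ Rmax x y :=
  le_sSup ⟨n, m, hnm, h, rfl⟩

/-- Rate composition: `R_max(x→z) ≥ R_max(x→y) · R_max(y→z)`. -/
theorem stmt16 {A : Type*} [AddCommMonoid A] [PartialOrder A] [IsOrderedAddMonoid A] (x y z : A) :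
    Rmax x y * Rmax y z ≤ Rmax x z := by
  refine ENNReal.sSup_mul_sSup_le ?_
  rintro _ ⟨n, m, -, hxy, rfl⟩ _ ⟨m', k, -, hyz, rfl⟩
  rw [ENNReal.div_mul_div_comm (ENNReal.natCast_ne_top n) (ENNReal.natCast_ne_top m')]
  rcases eq_or_ne (m * k) 0 with hmk | hmk
  · simp [← Nat.cast_mul, hmk]
  · exact_mod_cast div_le_Rmax (by simp [hmk]) (mul_nsmul_le_mul_nsmul hxy hyz)
end

section
/- The rate region is an interval: in an ordered commutative monoid, if r is a real number with R_min(x→y) ≤ r ≤ R_max(x→y), then r is a rate from x to y, i.e., every neighbourhood of r contains a fraction m/n with nx ≥ my. -/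
/-!
Feasible fractions are closed under mediants: `m₁ • y ≤ n₁ • x` and `m₂ • y ≤ n₂ • x` give
`(k m₁ + l m₂) • y ≤ (k n₁ + l n₂) • x`. If `m₁/n₁ < r < m₂/n₂` with both fractions feasible, then
`r = (m₁ + μ m₂)/(n₁ + μ n₂)` for some real `μ ≥ 0`, and the mediants with weights `j` and `⌊μ j⌋`
converge to `r`. So the closure of the feasible fractions contains the open interval between any two
of them, as well as their infimum and supremum, hence all of `[R_min, R_max]`.
-/

open Filter Topology Set
open scoped ENNReal

/-- The minimal rate `R_min(x→y) = inf { m/n : n • x ≥ m • y }` over fractions `m/n`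
(pairs of naturals, not both zero). -/
noncomputable def Rmin {A : Type*} [AddCommMonoid A] [PartialOrder A] [IsOrderedAddMonoid A] (x y : A) : ℝ≥0∞ :=
  sInf {r : ℝ≥0∞ | ∃ n m : ℕ, ¬(n = 0 ∧ m = 0) ∧ m • y ≤ n • x ∧ r = (m : ℝ≥0∞) / (n : ℝ≥0∞)}

theorem Icc_sInf_sSup_subset_closure {α : Type*} [CompleteLinearOrder α] [TopologicalSpace α]
    [OrderTopology α] [Nontrivial α] {S : Set α} (hS : ∀ s ∈ S, ∀ t ∈ S, Ioo s t ⊆ closure S) :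
    Icc (sInf S) (sSup S) ⊆ closure S := by
  rintro r ⟨hinf, hsup⟩
  obtain rfl | hne := S.eq_empty_or_nonempty
  · rw [sInf_empty, sSup_empty] at *
    exact absurd (hinf.trans hsup) (not_le_of_gt bot_lt_top)
  rcases hinf.eq_or_lt with rfl | hinf
  · exact sInf_mem_closure hne
  rcases hsup.eq_or_lt with rfl | hsup
  · exact sSup_mem_closure hne
  obtain ⟨s, hs, hsr⟩ := sInf_lt_iff.1 hinf
  obtain ⟨t, ht, hrt⟩ := lt_sSup_iff.1 hsup
  exact hS s hs t ht ⟨hsr, hrt⟩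

theorem tendsto_mediant_floor {a b c d μ : ℝ} (hμ : 0 ≤ μ) (h : c + μ * d ≠ 0) :
    Tendsto (fun j : ℕ ↦ (j * a + ⌊μ * j⌋₊ * b) / (j * c + ⌊μ * j⌋₊ * d)) atTop
      (𝓝 ((a + μ * b) / (c + μ * d))) := by
  have hfloor : Tendsto (fun j : ℕ ↦ (⌊μ * j⌋₊ : ℝ) / j) atTop (𝓝 μ) :=
    (tendsto_nat_floor_mul_div_atTop hμ).comp tendsto_natCast_atTop_atTop
  refine ((tendsto_const_nhds.add (hfloor.mul_const b)).div
    (tendsto_const_nhds.add (hfloor.mul_const d)) h).congr' ?_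
  filter_upwards [eventually_ne_atTop 0] with j hj
  have hj : (j : ℝ) ≠ 0 := Nat.cast_ne_zero.2 hj
  simp only [Pi.div_apply]
  field_simp

theorem exists_tendsto_mediant_floor {n₁ m₁ n₂ m₂ ρ : ℝ} (hn₁ : 0 < n₁) (hn₂ : 0 ≤ n₂)
    (h₁ : m₁ < ρ * n₁) (h₂ : ρ * n₂ < m₂) :
    ∃ μ : ℝ, Tendsto (fun j : ℕ ↦ (j * m₁ + ⌊μ * j⌋₊ * m₂) / (j * n₁ + ⌊μ * j⌋₊ * n₂)) atTop
      (𝓝 ρ) := by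
  -- `μ` solves `(m₁ + μ m₂)/(n₁ + μ n₂) = ρ`
  set μ := (ρ * n₁ - m₁) / (m₂ - ρ * n₂)
  have hμ : 0 ≤ μ := div_nonneg (by linarith) (by linarith)
  have hden : n₁ + μ * n₂ ≠ 0 := by positivity
  have hlim : (m₁ + μ * m₂) / (n₁ + μ * n₂) = ρ := by
    have : m₂ - ρ * n₂ ≠ 0 := by linarith
    rw [div_eq_iff hden]
    simp only [μ]
    field_simp
    ring
  exact ⟨μ, hlim ▸ tendsto_mediant_floor hμ hden⟩

section Monoid

variable {A : Type*} [AddCommMonoid A] [PartialOrder A] [IsOrderedAddMonoid A]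

theorem mediant_nsmul_le {x y : A} {n₁ m₁ n₂ m₂ : ℕ} (h₁ : m₁ • y ≤ n₁ • x)
    (h₂ : m₂ • y ≤ n₂ • x) (k l : ℕ) : (k * m₁ + l * m₂) • y ≤ (k * n₁ + l * n₂) • x := by
  simp only [add_nsmul, mul_nsmul']
  gcongr

def feasibleFractions (x y : A) : Set ℝ≥0∞ :=
  {r | ∃ n m : ℕ, ¬(n = 0 ∧ m = 0) ∧ m • y ≤ n • x ∧ r = (m : ℝ≥0∞) / (n : ℝ≥0∞)}

theorem Ioo_subset_closure_feasibleFractions {x y : A} {s t : ℝ≥0∞}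
    (hs : s ∈ feasibleFractions x y) (ht : t ∈ feasibleFractions x y) :
    Ioo s t ⊆ closure (feasibleFractions x y) := by
  rintro r ⟨hsr, hrt⟩
  obtain ⟨n₁, m₁, h0₁, hle₁, rfl⟩ := hs
  obtain ⟨n₂, m₂, -, hle₂, rfl⟩ := ht
  have h₁ : (m₁ : ℝ) < r.toReal * n₁ := by
    have := (ENNReal.div_lt_iff ((not_and_or.1 h0₁).imp Nat.cast_ne_zero.2 Nat.cast_ne_zero.2)
      (.inl (ENNReal.natCast_ne_top n₁))).1 hsr
    simpa using ENNReal.toReal_strict_mono (by finiteness) this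
  have h₂ : r.toReal * n₂ < m₂ := by
    simpa using ENNReal.toReal_strict_mono (ENNReal.natCast_ne_top m₂)
      (ENNReal.mul_lt_of_lt_div hrt)
  have hn₁ : 0 < n₁ := Nat.cast_pos.1 <|
    pos_of_mul_pos_right ((Nat.cast_nonneg _).trans_lt h₁) ENNReal.toReal_nonneg
  obtain ⟨μ, hreal⟩ :=
    exists_tendsto_mediant_floor (Nat.cast_pos.2 hn₁) (Nat.cast_nonneg _) h₁ h₂
  have hD : ∀ᶠ j : ℕ in atTop, 0 < j * n₁ + ⌊μ * j⌋₊ * n₂ := by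
    filter_upwards [eventually_gt_atTop 0] with j hj
    positivity
  refine mem_closure_of_tendsto (f := fun j : ℕ ↦
      ((j * m₁ + ⌊μ * j⌋₊ * m₂ : ℕ) : ℝ≥0∞) / ((j * n₁ + ⌊μ * j⌋₊ * n₂ : ℕ) : ℝ≥0∞))
    (b := atTop) ?_ ?_
  · rw [← ENNReal.ofReal_toReal hrt.ne_top]
    refine (ENNReal.tendsto_ofReal hreal).congr' ?_
    filter_upwards [hD] with j hj
    rw [← ENNReal.ofReal_natCast, ← ENNReal.ofReal_natCast,
      ← ENNReal.ofReal_div_of_pos (Nat.cast_pos.2 hj)]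
    push_cast
    rfl
  · filter_upwards [hD] with j hj
    exact ⟨_, _, fun h ↦ hj.ne' h.1, mediant_nsmul_le hle₁ hle₂ j _, rfl⟩

end Monoid

/-- The rate region is an interval: every `r` with `R_min(x→y) ≤ r ≤ R_max(x→y)` is a rate
from `x` to `y`, i.e. every neighbourhood of `r` (in `ℝ≥0∞`) contains a fraction `m/n` with
`n • x ≥ m • y`. -/
theorem stmt18 {A : Type*} [AddCommMonoid A] [PartialOrder A] [IsOrderedAddMonoid A] (x y : A) (r : ℝ≥0∞)
    (h1 : Rmin x y ≤ r) (h2 : r ≤ Rmax x y) :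
    ∀ V ∈ nhds r, ∃ n m : ℕ, ¬(n = 0 ∧ m = 0) ∧ m • y ≤ n • x ∧
      (m : ℝ≥0∞) / (n : ℝ≥0∞) ∈ V := by
  intro V hV
  have hr : r ∈ closure (feasibleFractions x y) :=
    Icc_sInf_sSup_subset_closure (fun _ hs _ ht ↦ Ioo_subset_closure_feasibleFractions hs ht)
      ⟨h1, h2⟩
  obtain ⟨_, hV, n, m, hnm, hle, rfl⟩ := mem_closure_iff_nhds.1 hr V hV
  exact ⟨n, m, hnm, hle, hV⟩
end
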